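/- Let χ be a primitive Dirichlet character of conductor u > 1. Then the generalized Dedekind eta function η_χ is holomorphic on the upper half-plane ℍ and has no zeros on ℍ. -/

import Mathlib

/-!
For `τ` in the upper half-plane, `q = exp (2πiτ)` lies in the open unit disc, so it suffices to
study `∏ₙ ∏ₐ (1 - ζₐ qⁿ⁺¹) ^ cₐₙ` there, for `‖ζₐ‖ ≤ 1` and bounded exponents `cₐₙ`.
Every base lies in the slit plane, so every factor equals `exp (log (1 - ζₐ qⁿ⁺¹) * cₐₙ)`, and
`‖log (1 + w)‖ ≤ ‖w‖ / (1 - ‖w‖)` makes the `n`-th logarithm `O(rⁿ⁺¹)` on `‖q‖ ≤ r < 1`.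
The series of logarithms thus converges locally uniformly to a holomorphic function, and the
product is its exponential: holomorphic and zero-free.
-/

open Complex Filter

noncomputable section

/-- `q = exp(2πiτ)`. -/
def qexp (z : ℂ) : ℂ := Complex.exp (2 * Real.pi * Complex.I * z)

/-- The generalized Dedekind eta function attached to a Dirichlet character `χ` mod `N`,
`η_χ(τ) = ∏_{n≥1} ∏_{a=1}^{u} (1 − ζ_u^a q^n)^{χ̄(an)}` where `u` is the conductor of `χ`,
`ζ_u = exp(2πi/u)`, and complex powers use the principal branch of the logarithm
(Lean's `Complex.cpow`). -/
def genEta {N : ℕ} (χ : DirichletCharacter ℂ N) (z : ℂ) : ℂ :=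
  ∏' n : ℕ, ∏ a ∈ Finset.Icc 1 χ.conductor,
    (1 - Complex.exp (2 * Real.pi * Complex.I * a / χ.conductor) * qexp ((n + 1 : ℕ) * z))
      ^ ((starRingEnd ℂ) (χ ((a * (n + 1) : ℕ) : ZMod N)))

open Metric

lemma Complex.norm_log_one_add_le_div {z : ℂ} (hz : ‖z‖ < 1) :
    ‖log (1 + z)‖ ≤ ‖z‖ / (1 - ‖z‖) := by
  refine (norm_log_one_add_le hz).trans ?_
  have hd : 0 < 1 - ‖z‖ := sub_pos.2 hz
  rw [le_div_iff₀ hd]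
  field_simp
  nlinarith [norm_nonneg z]

lemma Complex.one_sub_mem_slitPlane {w : ℂ} (hw : ‖w‖ < 1) : 1 - w ∈ slitPlane := by
  simpa [sub_eq_add_neg] using mem_slitPlane_of_norm_lt_one (z := -w) (by rwa [norm_neg])

lemma norm_mul_pow_succ_le {ζ q : ℂ} {r : ℝ} (hζ : ‖ζ‖ ≤ 1) (hq : ‖q‖ ≤ r) (n : ℕ) :
    ‖ζ * q ^ (n + 1)‖ ≤ r ^ (n + 1) := by
  rw [norm_mul, norm_pow]
  calc ‖ζ‖ * ‖q‖ ^ (n + 1) ≤ 1 * r ^ (n + 1) := by gcongr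
    _ = r ^ (n + 1) := one_mul _

lemma norm_log_one_sub_mul_pow_succ_mul_le {ζ q c : ℂ} {r C : ℝ} (hζ : ‖ζ‖ ≤ 1)
    (hc : ‖c‖ ≤ C) (hq : ‖q‖ ≤ r) (hr : r < 1) (n : ℕ) :
    ‖log (1 - ζ * q ^ (n + 1)) * c‖ ≤ C * (r ^ (n + 1) / (1 - r)) := by
  set w := ζ * q ^ (n + 1)
  have hr₀ : 0 ≤ r := (norm_nonneg q).trans hq
  have hwr : ‖w‖ ≤ r ^ (n + 1) := norm_mul_pow_succ_le hζ hq n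
  have hw_le : ‖w‖ ≤ r := hwr.trans (pow_le_of_le_one hr₀ hr.le n.succ_ne_zero)
  have hlog : ‖log (1 - w)‖ ≤ r ^ (n + 1) / (1 - r) := by
    calc ‖log (1 - w)‖ = ‖log (1 + -w)‖ := by rw [sub_eq_add_neg]
      _ ≤ ‖w‖ / (1 - ‖w‖) := by
        simpa using Complex.norm_log_one_add_le_div (z := -w) (by simpa using hw_le.trans_lt hr)
      _ ≤ r ^ (n + 1) / (1 - r) := by gcongr
  rw [norm_mul, mul_comm]
  exact mul_le_mul hc hlog (norm_nonneg _) ((norm_nonneg _).trans hc)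

lemma summable_mul_pow_succ_div {r : ℝ} (K : ℝ) (hr₀ : 0 ≤ r) (hr : r < 1) :
    Summable fun n : ℕ ↦ K * (r ^ (n + 1) / (1 - r)) :=
  (((summable_nat_add_iff 1).2 (summable_geometric_of_lt_one hr₀ hr)).div_const _).mul_left _

section EtaProduct

variable {ι : Type*} (s : Finset ι) (ζ : ι → ℂ) (c : ι → ℕ → ℂ)

def etaProduct (q : ℂ) : ℂ :=
  ∏' n : ℕ, ∏ a ∈ s, (1 - ζ a * q ^ (n + 1)) ^ c a n

def etaLogTerm (n : ℕ) (q : ℂ) : ℂ :=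
  ∑ a ∈ s, log (1 - ζ a * q ^ (n + 1)) * c a n

variable {s ζ c} {C : ℝ} (hζ : ∀ a, ‖ζ a‖ ≤ 1) (hc : ∀ a n, ‖c a n‖ ≤ C)
include hζ

lemma one_sub_mul_pow_succ_mem_slitPlane {q : ℂ} (hq : ‖q‖ < 1) (a : ι) (n : ℕ) :
    1 - ζ a * q ^ (n + 1) ∈ slitPlane :=
  Complex.one_sub_mem_slitPlane <|
    (norm_mul_pow_succ_le (hζ a) le_rfl n).trans_lt (pow_lt_one₀ (norm_nonneg q) hq n.succ_ne_zero)

lemma prod_cpow_eq_exp_etaLogTerm {q : ℂ} (hq : ‖q‖ < 1) (n : ℕ) :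
    ∏ a ∈ s, (1 - ζ a * q ^ (n + 1)) ^ c a n = exp (etaLogTerm s ζ c n q) := by
  rw [etaLogTerm, exp_sum]
  refine Finset.prod_congr rfl fun a _ ↦ ?_
  exact cpow_def_of_ne_zero (slitPlane_ne_zero (one_sub_mul_pow_succ_mem_slitPlane hζ hq a n)) _

lemma differentiableOn_etaLogTerm (n : ℕ) :
    DifferentiableOn ℂ (etaLogTerm s ζ c n) (ball 0 1) := by
  intro q hq
  refine DifferentiableAt.differentiableWithinAt (DifferentiableAt.fun_sum fun a _ ↦ ?_)
  refine DifferentiableAt.mul_const (DifferentiableAt.clog (by fun_prop) ?_) _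
  exact one_sub_mul_pow_succ_mem_slitPlane hζ (mem_ball_zero_iff.1 hq) a n

include hc

lemma norm_etaLogTerm_le {q : ℂ} {r : ℝ} (hq : ‖q‖ ≤ r) (hr : r < 1) (n : ℕ) :
    ‖etaLogTerm s ζ c n q‖ ≤ s.card * C * (r ^ (n + 1) / (1 - r)) := by
  refine (norm_sum_le_of_le s fun a _ ↦ ?_).trans_eq
    (by rw [Finset.sum_const, nsmul_eq_mul, mul_assoc])
  exact norm_log_one_sub_mul_pow_succ_mul_le (hζ a) (hc a n) hq hr n

lemma summable_etaLogTerm {q : ℂ} (hq : ‖q‖ < 1) : Summable fun n ↦ etaLogTerm s ζ c n q :=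
  Summable.of_norm_bounded (summable_mul_pow_succ_div _ (norm_nonneg q) hq)
    (norm_etaLogTerm_le hζ hc le_rfl hq)

lemma etaProduct_eq_exp_tsum {q : ℂ} (hq : ‖q‖ < 1) :
    etaProduct s ζ c q = exp (∑' n, etaLogTerm s ζ c n q) := by
  rw [etaProduct, tprod_congr (prod_cpow_eq_exp_etaLogTerm hζ hq)]
  exact (summable_etaLogTerm hζ hc hq).hasSum.cexp.tprod_eq

lemma differentiableOn_tsum_etaLogTerm :
    DifferentiableOn ℂ (fun q ↦ ∑' n, etaLogTerm s ζ c n q) (ball 0 1) := by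
  intro q hq
  obtain ⟨r, hqr, hr⟩ := exists_between (mem_ball_zero_iff.1 hq)
  have hdiff : DifferentiableOn ℂ (fun q ↦ ∑' n, etaLogTerm s ζ c n q) (ball 0 r) :=
    differentiableOn_tsum_of_summable_norm
      (summable_mul_pow_succ_div _ ((norm_nonneg q).trans hqr.le) hr)
      (fun n ↦ (differentiableOn_etaLogTerm hζ n).mono (ball_subset_ball hr.le)) isOpen_ball
      (fun n w hw ↦ norm_etaLogTerm_le hζ hc (mem_ball_zero_iff.1 hw).le hr n)
  exact (hdiff.differentiableAt (isOpen_ball.mem_nhds (mem_ball_zero_iff.2 hqr)))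
    |>.differentiableWithinAt

lemma differentiableOn_etaProduct : DifferentiableOn ℂ (etaProduct s ζ c) (ball 0 1) :=
  (differentiableOn_tsum_etaLogTerm hζ hc).cexp.congr
    fun _ hq ↦ etaProduct_eq_exp_tsum hζ hc (mem_ball_zero_iff.1 hq)

lemma etaProduct_ne_zero {q : ℂ} (hq : ‖q‖ < 1) : etaProduct s ζ c q ≠ 0 := by
  rw [etaProduct_eq_exp_tsum hζ hc hq]
  exact exp_ne_zero _

end EtaProduct

lemma norm_qexp_lt_one {z : ℂ} (hz : 0 < z.im) : ‖qexp z‖ < 1 :=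
  UpperHalfPlane.norm_exp_two_pi_I_lt_one ⟨z, hz⟩

lemma qexp_natCast_mul (n : ℕ) (z : ℂ) : qexp (n * z) = qexp z ^ n := by
  rw [qexp, qexp, ← exp_nat_mul]
  ring_nf

lemma genEta_eq_etaProduct_qexp {N : ℕ} (χ : DirichletCharacter ℂ N) :
    genEta χ = fun z ↦ etaProduct (Finset.Icc 1 χ.conductor)
      (fun a : ℕ ↦ exp (2 * Real.pi * I * a / χ.conductor))
      (fun a n ↦ starRingEnd ℂ (χ ((a * (n + 1) : ℕ) : ZMod N))) (qexp z) := by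
  funext z
  simp only [genEta, etaProduct, qexp_natCast_mul]

theorem genEta_holomorphic_and_nonvanishing_general {u : ℕ}
    (χ : DirichletCharacter ℂ u) :
    DifferentiableOn ℂ (genEta χ) {z : ℂ | 0 < z.im} ∧
      ∀ z : ℂ, 0 < z.im → genEta χ z ≠ 0 := by
  have hζ (a : ℕ) : ‖exp (2 * Real.pi * I * a / χ.conductor)‖ ≤ 1 := by
    simp [norm_exp]
  have hc (a n : ℕ) : ‖starRingEnd ℂ (χ ((a * (n + 1) : ℕ) : ZMod u))‖ ≤ 1 := by
    rw [RCLike.norm_conj]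
    exact χ.norm_le_one _
  have hmaps : Set.MapsTo qexp {z : ℂ | 0 < z.im} (ball 0 1) :=
    fun z hz ↦ mem_ball_zero_iff.2 (norm_qexp_lt_one hz)
  rw [genEta_eq_etaProduct_qexp]
  exact ⟨(differentiableOn_etaProduct hζ hc).comp (by unfold qexp; fun_prop) hmaps,
    fun z hz ↦ etaProduct_ne_zero hζ hc (mem_ball_zero_iff.1 (hmaps hz))⟩

/-- for a primitive Dirichlet character `χ` of conductor `u > 1`, the generalized
Dedekind eta function `η_χ` is holomorphic on the upper half-plane and has no zeros there. -/
theorem genEta_holomorphic_and_nonvanishing {u : ℕ} (hu : 1 < u)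
    (χ : DirichletCharacter ℂ u) (hχ : χ.IsPrimitive) :
    DifferentiableOn ℂ (genEta χ) {z : ℂ | 0 < z.im} ∧
      ∀ z : ℂ, 0 < z.im → genEta χ z ≠ 0 :=
  genEta_holomorphic_and_nonvanishing_general χ
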